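/- arXiv:2012.11465 — 4 statements merged into one kernel-verified Lean document; each statement's English description precedes it below -/
import Mathlib

section
/- Let f₁, f₂ : [0,∞) × ℝ → ℝ be continuous functions with f₁(t,x) < f₂(t,x) for all (t,x), and let X₁, X₂ : [0,∞) → ℝ be continuous functions satisfying Xᵢ(t) = X₀ + ∫₀ᵗ fᵢ(s, Xᵢ(s)) ds for all t ≥ 0 and i = 1,2, with the same initial value X₀ ∈ ℝ. Then X₁(t) < X₂(t) for every t > 0. -/
/-!
Put `D = X₂ - X₁`. By the fundamental theorem of calculus `Xᵢ` is differentiable with derivative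
`fᵢ(t, Xᵢ(t))`, so at every zero of `D` its derivative `f₂(t, x) - f₁(t, x)` is positive. Since
`D(0) = 0`, the fencing theorem for right derivatives gives `D ≥ 0` on `[0, ∞)`. A zero of `D` at
some `t > 0` would then be an interior local minimum, forcing `D'(t) = 0`, a contradiction.
-/

open MeasureTheory Set

section IntegralEquation

variable {h X : ℝ → ℝ} {x₀ : ℝ}

theorem hasDerivWithinAt_Ici_of_eq_add_integral (hh : ContinuousOn h (Ici 0))
    (hX : ∀ t, 0 ≤ t → X t = x₀ + ∫ s in (0:ℝ)..t, h s) {t : ℝ} (ht : 0 ≤ t) :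
    HasDerivWithinAt X (h t) (Ici t) t := by
  have hIoi : Ioi t ⊆ Ici 0 := fun s hs => ht.trans hs.le
  have hF := (intervalIntegral.integral_hasDerivWithinAt_right (s := Ici t)
    ((hh.mono Icc_subset_Ici_self).intervalIntegrable_of_Icc ht)
    ((hh.mono hIoi).stronglyMeasurableAtFilter_nhdsWithin measurableSet_Ioi t)
    ((hh t ht).mono hIoi)).const_add x₀
  exact hF.congr (fun s hs => hX s (ht.trans hs)) (hX t ht)

theorem hasDerivAt_of_eq_add_integral (hh : ContinuousOn h (Ici 0))
    (hX : ∀ t, 0 ≤ t → X t = x₀ + ∫ s in (0:ℝ)..t, h s) {t : ℝ} (ht : 0 < t) :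
    HasDerivAt X (h t) t := by
  have hF := (intervalIntegral.integral_hasDerivAt_right
    ((hh.mono Icc_subset_Ici_self).intervalIntegrable_of_Icc ht.le)
    ((hh.mono Ioi_subset_Ici_self).stronglyMeasurableAtFilter isOpen_Ioi t ht)
    (hh.continuousAt (Ici_mem_nhds ht))).const_add x₀
  exact hF.congr_of_eventuallyEq <|
    Filter.mem_of_superset (Ioi_mem_nhds ht) fun s hs => hX s hs.le

end IntegralEquation

section Comparison

variable {f f' B B' : ℝ → ℝ} {a : ℝ}

theorem forall_hasDerivWithinAt_Ici (hfa : HasDerivWithinAt f (f' a) (Ici a) a)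
    (hf : ∀ x, a < x → HasDerivAt f (f' x) x) :
    ∀ x, a ≤ x → HasDerivWithinAt f (f' x) (Ici x) x := by
  intro x hx
  rcases hx.eq_or_lt with rfl | hx
  · exact hfa
  · exact (hf x hx).hasDerivWithinAt

theorem continuousOn_Ici_of_hasDerivWithinAt (hfa : HasDerivWithinAt f (f' a) (Ici a) a)
    (hf : ∀ x, a < x → HasDerivAt f (f' x) x) : ContinuousOn f (Ici a) := by
  intro x hx
  rcases (mem_Ici.mp hx).eq_or_lt with rfl | hx
  · exact hfa.continuousWithinAt
  · exact (hf x hx).continuousAt.continuousWithinAt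

theorem image_lt_of_deriv_lt_deriv_boundary_Ici (hfa : HasDerivWithinAt f (f' a) (Ici a) a)
    (hf : ∀ x, a < x → HasDerivAt f (f' x) x) (hBa : HasDerivWithinAt B (B' a) (Ici a) a)
    (hB : ∀ x, a < x → HasDerivAt B (B' x) x) (ha : f a ≤ B a)
    (bound : ∀ x, a ≤ x → f x = B x → f' x < B' x) : ∀ x, a < x → f x < B x := by
  have hfI := forall_hasDerivWithinAt_Ici hfa hf
  have hBI := forall_hasDerivWithinAt_Ici hBa hB
  have hle : ∀ x, a ≤ x → f x ≤ B x := fun x hx =>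
    image_le_of_deriv_right_lt_deriv_boundary'
      ((continuousOn_Ici_of_hasDerivWithinAt hfa hf).mono Icc_subset_Ici_self)
      (fun y hy => hfI y hy.1) ha
      ((continuousOn_Ici_of_hasDerivWithinAt hBa hB).mono Icc_subset_Ici_self)
      (fun y hy => hBI y hy.1) (fun y hy => bound y hy.1) ⟨hx, le_rfl⟩
  intro x hx
  refine (hle x hx.le).lt_of_ne fun hfx => ?_
  have hmin : IsLocalMin (fun y => B y - f y) x :=
    Filter.mem_of_superset (Ioi_mem_nhds hx) fun y hy => by
      simpa [hfx] using hle y hy.le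
  have hzero := hmin.hasDerivAt_eq_zero ((hB x hx).sub (hf x hx))
  linarith [bound x hx.le hfx]

end Comparison

/-- Strict comparison principle for integral equations with strictly ordered drifts. -/
theorem stmt0 (f₁ f₂ : ℝ → ℝ → ℝ) (X₁ X₂ : ℝ → ℝ) (X₀ : ℝ)
    (hf₁ : ContinuousOn (fun p : ℝ × ℝ => f₁ p.1 p.2) (Set.Ici 0 ×ˢ Set.univ))
    (hf₂ : ContinuousOn (fun p : ℝ × ℝ => f₂ p.1 p.2) (Set.Ici 0 ×ˢ Set.univ))
    (hlt : ∀ t x, 0 ≤ t → f₁ t x < f₂ t x)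
    (hX₁ : Continuous X₁) (hX₂ : Continuous X₂)
    (h₁ : ∀ t, 0 ≤ t → X₁ t = X₀ + ∫ s in (0:ℝ)..t, f₁ s (X₁ s))
    (h₂ : ∀ t, 0 ≤ t → X₂ t = X₀ + ∫ s in (0:ℝ)..t, f₂ s (X₂ s)) :
    ∀ t, 0 < t → X₁ t < X₂ t := by
  have hc₁ : ContinuousOn (fun s => f₁ s (X₁ s)) (Ici 0) :=
    hf₁.comp (continuous_id.prodMk hX₁).continuousOn fun s hs => ⟨hs, mem_univ _⟩
  have hc₂ : ContinuousOn (fun s => f₂ s (X₂ s)) (Ici 0) :=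
    hf₂.comp (continuous_id.prodMk hX₂).continuousOn fun s hs => ⟨hs, mem_univ _⟩
  refine image_lt_of_deriv_lt_deriv_boundary_Ici
    (hasDerivWithinAt_Ici_of_eq_add_integral hc₁ h₁ le_rfl)
    (fun _ => hasDerivAt_of_eq_add_integral hc₁ h₁)
    (hasDerivWithinAt_Ici_of_eq_add_integral hc₂ h₂ le_rfl)
    (fun _ => hasDerivAt_of_eq_add_integral hc₂ h₂) ?_ ?_
  · simp [h₁ 0 le_rfl, h₂ 0 le_rfl]
  · intro x hx hX
    simpa only [hX] using hlt x (X₂ x) hx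
end

section
/- Let λ ∈ (0,1), γ > 0 with γλ + λ > 1, c > 0. Define β = (λ^{λ/(1−λ)} − λ^{1/(1−λ)}) / c^{λ/(1−λ)} and, for Λ̃ > 0, set ε = 1 / ((2β)^{(1−λ)/(γλ+λ−1)} Λ̃^{1/(γλ+λ−1)}). Then the function F_ε(x) = ε + (c/ε^γ) x − Λ̃ x^λ on [0,∞) attains its minimum at x* = (λ/c)^{1/(1−λ)} ε^{γ/(1−λ)} Λ̃^{1/(1−λ)}, and F_ε(x*) = ε − β ε^{γλ/(1−λ)} Λ̃^{1/(1−λ)} = ε/2. -/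
open Set Real

/-!
By concavity of `x ↦ x ^ p` for `0 ≤ p ≤ 1` (weighted AM–GM), its graph lies below its tangent
line at every `s > 0`. Hence `a x - b x ^ p` is minimised on `[0, ∞)` at the point `s` where
`a = b p s ^ (p - 1)`, with minimum `-(1 - p) b s ^ p`. For `F_ε` this point is
`x* = (λ ε^γ Λ̃ / c) ^ (1 / (1 - λ))` and the minimum is `ε - β ε^{γλ/(1-λ)} Λ̃^{1/(1-λ)}`.
Since `γλ/(1-λ) = 1 + (γλ+λ-1)/(1-λ)` and `ε` is chosen so that
`ε^{(γλ+λ-1)/(1-λ)} = (2β Λ̃^{1/(1-λ)})⁻¹`, this minimum equals `ε/2`.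
-/

theorem rpow_sub_one_mul_self {s : ℝ} (hs : s ≠ 0) (p : ℝ) : s ^ (p - 1) * s = s ^ p := by
  rw [← rpow_add_one hs, sub_add_cancel]

theorem rpow_le_tangent_line {p s x : ℝ} (hp0 : 0 ≤ p) (hp1 : p ≤ 1) (hs : 0 < s)
    (hx : 0 ≤ x) :
    x ^ p ≤ s ^ p + p * s ^ (p - 1) * (x - s) := by
  have hamgm := geom_mean_le_arith_mean2_weighted hp0 (sub_nonneg.2 hp1) hx hs.le (by ring)
  have hcancel : s ^ (p - 1) * s ^ (1 - p) = 1 := by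
    rw [← rpow_add hs]; norm_num
  calc x ^ p = s ^ (p - 1) * (x ^ p * s ^ (1 - p)) := by
        rw [mul_left_comm, hcancel, mul_one]
    _ ≤ s ^ (p - 1) * (p * x + (1 - p) * s) := by gcongr
    _ = s ^ (p - 1) * s + p * s ^ (p - 1) * (x - s) := by ring
    _ = s ^ p + p * s ^ (p - 1) * (x - s) := by rw [rpow_sub_one_mul_self hs.ne']

theorem mul_sub_mul_rpow_le {p a b s x : ℝ} (hp0 : 0 ≤ p) (hp1 : p ≤ 1) (hb : 0 ≤ b)
    (hs : 0 < s) (hx : 0 ≤ x) (ha : a = b * p * s ^ (p - 1)) :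
    a * s - b * s ^ p ≤ a * x - b * x ^ p := by
  have := mul_le_mul_of_nonneg_left (rpow_le_tangent_line hp0 hp1 hs hx) hb
  rw [ha]
  linarith

theorem mul_sub_mul_rpow_eq {p a b s : ℝ} (hs : s ≠ 0) (ha : a = b * p * s ^ (p - 1)) :
    a * s - b * s ^ p = -((1 - p) * b * s ^ p) := by
  rw [ha, mul_assoc (b * p), rpow_sub_one_mul_self hs]
  ring

theorem rpow_one_div_one_sub_rpow_sub_one {p t : ℝ} (hp : p ≠ 1) (ht : 0 ≤ t) :
    (t ^ (1 / (1 - p))) ^ (p - 1) = t⁻¹ := by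
  rw [← rpow_mul ht, show 1 / (1 - p) * (p - 1) = -1 by field_simp [sub_ne_zero.2 hp.symm]; ring,
    rpow_neg_one]

theorem mul_rpow_div_one_sub {p t : ℝ} (hp : p ≠ 1) (ht : 0 < t) :
    t * t ^ (p / (1 - p)) = t ^ (1 / (1 - p)) := by
  rw [mul_comm, ← rpow_add_one ht.ne']
  congr 1
  field_simp [sub_ne_zero.2 hp.symm]
  ring

theorem inv_rpow_rpow_one_div {r K : ℝ} (hr : r ≠ 0) (hK : 0 ≤ K) :
    ((K ^ r)⁻¹) ^ (1 / r) = K⁻¹ := by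
  rw [inv_rpow (rpow_nonneg hK r), ← rpow_mul hK, mul_one_div_cancel hr, rpow_one]

theorem beta_mul_rpow_mul_rpow_eq_half {lam gam Lam beta eps : ℝ} (hlam : lam ≠ 1)
    (hθ : gam * lam + lam - 1 ≠ 0) (hLam : 0 < Lam) (hbeta : 0 < beta)
    (heps : eps = 1 / ((2 * beta) ^ ((1 - lam) / (gam * lam + lam - 1)) *
      Lam ^ (1 / (gam * lam + lam - 1)))) :
    beta * eps ^ (gam * lam / (1 - lam)) * Lam ^ (1 / (1 - lam)) = eps / 2 := by
  have h1l : 1 - lam ≠ 0 := sub_ne_zero.2 hlam.symm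
  have heps' :
      eps = ((2 * beta * Lam ^ (1 / (1 - lam))) ^ ((1 - lam) / (gam * lam + lam - 1)))⁻¹ := by
    rw [heps, one_div, mul_rpow (by positivity : 0 ≤ 2 * beta)
      (by positivity : 0 ≤ Lam ^ (1 / (1 - lam))), ← rpow_mul hLam.le]
    congr 3
    field_simp
  have hepsθ :
      eps ^ ((gam * lam + lam - 1) / (1 - lam)) = (2 * beta * Lam ^ (1 / (1 - lam)))⁻¹ := by
    rw [heps', ← one_div_div (1 - lam) (gam * lam + lam - 1),
      inv_rpow_rpow_one_div (div_ne_zero h1l hθ) (by positivity)]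
  have heps0 : 0 < eps := by rw [heps']; positivity
  rw [show gam * lam / (1 - lam) = (gam * lam + lam - 1) / (1 - lam) + 1 by field_simp; ring,
    rpow_add_one heps0.ne', hepsθ]
  field_simp

theorem stmt3_general (lam gam c Lam beta eps : ℝ)
    (hlam : lam ∈ Set.Ioo (0:ℝ) 1) (hcond : 1 < gam * lam + lam)
    (hc : 0 < c) (hLam : 0 < Lam)
    (hbeta : beta = (lam ^ (lam / (1 - lam)) - lam ^ (1 / (1 - lam))) / c ^ (lam / (1 - lam)))
    (heps : eps = 1 / ((2 * beta) ^ ((1 - lam) / (gam * lam + lam - 1)) *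
      Lam ^ (1 / (gam * lam + lam - 1))))
    (F : ℝ → ℝ)
    (hF : ∀ x, F x = eps + c / eps ^ gam * x - Lam * x ^ lam) :
    (∀ x, 0 ≤ x →
      F ((lam / c) ^ (1 / (1 - lam)) * eps ^ (gam / (1 - lam)) * Lam ^ (1 / (1 - lam))) ≤ F x) ∧
    F ((lam / c) ^ (1 / (1 - lam)) * eps ^ (gam / (1 - lam)) * Lam ^ (1 / (1 - lam)))
      = eps - beta * eps ^ (gam * lam / (1 - lam)) * Lam ^ (1 / (1 - lam)) ∧
    F ((lam / c) ^ (1 / (1 - lam)) * eps ^ (gam / (1 - lam)) * Lam ^ (1 / (1 - lam))) = eps / 2 := by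
  obtain ⟨hl0, hl1⟩ := hlam
  have hl1' : lam ≠ 1 := hl1.ne
  have hbeta' : beta = (1 - lam) * (lam / c) ^ (lam / (1 - lam)) := by
    rw [hbeta, ← mul_rpow_div_one_sub hl1' hl0, div_rpow hl0.le hc.le]
    ring
  have hbpos : 0 < beta := by rw [hbeta']; have := sub_pos.2 hl1; positivity
  have heps0 : 0 < eps := by rw [heps]; positivity
  set t := lam / c * eps ^ gam * Lam with ht_def
  have ht : 0 < t := by positivity
  have hxs : (lam / c) ^ (1 / (1 - lam)) * eps ^ (gam / (1 - lam)) * Lam ^ (1 / (1 - lam))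
      = t ^ (1 / (1 - lam)) := by
    rw [mul_rpow (by positivity) hLam.le, mul_rpow (by positivity) (by positivity),
      ← rpow_mul heps0.le, mul_one_div]
  rw [hxs]
  have hslope : c / eps ^ gam = Lam * lam * (t ^ (1 / (1 - lam))) ^ (lam - 1) := by
    rw [rpow_one_div_one_sub_rpow_sub_one hl1' ht.le, ht_def]
    field_simp
  have hvalue : (1 - lam) * Lam * (t ^ (1 / (1 - lam))) ^ lam
      = beta * eps ^ (gam * lam / (1 - lam)) * Lam ^ (1 / (1 - lam)) := by
    rw [← rpow_mul ht.le, one_div_mul_eq_div, ht_def, mul_rpow (by positivity) hLam.le,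
      mul_rpow (by positivity) (by positivity), ← rpow_mul heps0.le, mul_div_assoc', hbeta',
      ← mul_rpow_div_one_sub hl1' hLam]
    ring
  have hhalf := beta_mul_rpow_mul_rpow_eq_half hl1' (by linarith) hLam hbpos heps
  have hmin := mul_sub_mul_rpow_eq (rpow_pos_of_pos ht _).ne' hslope
  refine ⟨fun x hx => ?_, ?_, ?_⟩
  · rw [hF, hF]
    linarith [mul_sub_mul_rpow_le hl0.le hl1.le hLam.le (rpow_pos_of_pos ht _) hx hslope]
  · rw [hF]; linarith
  · rw [hF]; linarith

/-- Explicit computation: with ε = ((2β)^{(1−λ)} Λ̃)^{-1/(γλ+λ−1)}, the function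
F_ε(x) = ε + (c/ε^γ)x − Λ̃ x^λ attains its minimum at x* and F_ε(x*) = ε/2. -/
theorem stmt3 (lam gam c Lam beta eps : ℝ)
    (hlam : lam ∈ Set.Ioo (0:ℝ) 1) (hgam : 0 < gam) (hcond : 1 < gam * lam + lam)
    (hc : 0 < c) (hLam : 0 < Lam)
    (hbeta : beta = (lam ^ (lam / (1 - lam)) - lam ^ (1 / (1 - lam))) / c ^ (lam / (1 - lam)))
    (heps : eps = 1 / ((2 * beta) ^ ((1 - lam) / (gam * lam + lam - 1)) *
      Lam ^ (1 / (gam * lam + lam - 1))))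
    (F : ℝ → ℝ)
    (hF : ∀ x, F x = eps + c / eps ^ gam * x - Lam * x ^ lam) :
    (∀ x, 0 ≤ x →
      F ((lam / c) ^ (1 / (1 - lam)) * eps ^ (gam / (1 - lam)) * Lam ^ (1 / (1 - lam))) ≤ F x) ∧
    F ((lam / c) ^ (1 / (1 - lam)) * eps ^ (gam / (1 - lam)) * Lam ^ (1 / (1 - lam)))
      = eps - beta * eps ^ (gam * lam / (1 - lam)) * Lam ^ (1 / (1 - lam)) ∧
    F ((lam / c) ^ (1 / (1 - lam)) * eps ^ (gam / (1 - lam)) * Lam ^ (1 / (1 - lam))) = eps / 2 :=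
  stmt3_general lam gam c Lam beta eps hlam hcond hc hLam hbeta heps F hF
end

section
/- Let α ∈ [1/2, 1), κ, θ > 0, and let Y : [0,T] → (0,∞) be λ-Hölder continuous with λ > 1/2 and satisfy Y(t) = Y(0) + ∫₀ᵗ (κ Y(s)^{−α/(1−α)} − θ Y(s)) ds + Z(t), where Z is λ-Hölder continuous. Then X(t) := Y(t)^{1/(1−α)} satisfies, pathwise, X(t) = X(0) + ∫₀ᵗ (κ/(1−α) − (θ/(1−α)) X(s)) ds + (1/(1−α)) ∫₀ᵗ X(s)^α dZ(s), where the last integral is the pathwise Young (Riemann–Stieltjes) integral. -/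
/-! With `β = α / (1 - α)` we have `X = Y ^ (β + 1)` and `X ^ α = Y ^ β`. On the uniform
partition of `[0, t]` the increment of `Z` is `ΔY - ∫ F`, where `F` is the drift of `Y`.
Since `y ↦ y ^ β` is Lipschitz on the compact range of `Y` in `(0, ∞)`, Taylor's formula bounds
`Y ^ β ΔY - Δ(Y ^ (β + 1)) / (β + 1)` by `O(Δt ^ (2λ))`, and freezing `Y ^ β` on a cell changes its
drift integral by `O(Δt ^ (1 + λ))`. Both exponents exceed `1`, so summed over the `N` cells these
errors vanish as `N → ∞`, while `Y ^ β F = κ - θ X` turns the drift term into that of `X`. -/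

open Set Real Filter MeasureTheory
open scoped NNReal Topology

lemma uniform_partition_mem_Icc {t : ℝ} (ht : 0 ≤ t) {k N : ℕ} (hk : k < N) :
    (k : ℝ) * t / N ∈ Icc 0 t ∧ ((k : ℝ) + 1) * t / N ∈ Icc 0 t := by
  have hN : (0 : ℝ) < N := by exact_mod_cast (Nat.zero_le k).trans_lt hk
  have hkN : (k : ℝ) + 1 ≤ N := by exact_mod_cast hk
  refine ⟨⟨by positivity, ?_⟩, ⟨by positivity, ?_⟩⟩ <;>
    rw [div_le_iff₀ hN, mul_comm t] <;> gcongr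

theorem tendsto_sum_uniform_partition_of_abs_le_rpow {e : ℝ → ℝ → ℝ} {t C γ : ℝ}
    (ht : 0 ≤ t) (hγ : 1 < γ)
    (he : ∀ a ∈ Icc 0 t, ∀ b ∈ Icc 0 t, a ≤ b → |e a b| ≤ C * (b - a) ^ γ) :
    Tendsto (fun N : ℕ => ∑ k ∈ Finset.range N, e (k * t / N) ((k + 1) * t / N))
      atTop (𝓝 0) := by
  have hbound : ∀ N : ℕ, 0 < N →
      ‖∑ k ∈ Finset.range N, e (k * t / N) ((k + 1) * t / N)‖ ≤ C * t ^ γ * (N : ℝ) ^ (1 - γ) := by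
    intro N hN
    have hN' : (0 : ℝ) < N := by exact_mod_cast hN
    calc _ ≤ ∑ k ∈ Finset.range N, |e (k * t / N) ((k + 1) * t / N)| :=
          Finset.abs_sum_le_sum_abs _ _
      _ ≤ ∑ _k ∈ Finset.range N, C * (t / N) ^ γ := Finset.sum_le_sum fun k hk => by
          obtain ⟨ha, hb⟩ := uniform_partition_mem_Icc ht (Finset.mem_range.1 hk)
          have := he _ ha _ hb (by gcongr; linarith)
          rwa [show ((k : ℝ) + 1) * t / N - k * t / N = t / N by ring] at this
      _ = C * t ^ γ * (N : ℝ) ^ (1 - γ) := by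
          rw [Finset.sum_const, Finset.card_range, nsmul_eq_mul, div_rpow ht hN'.le,
            rpow_sub hN', rpow_one]
          field_simp
  have hlim : Tendsto (fun N : ℕ => C * t ^ γ * (N : ℝ) ^ (1 - γ)) atTop (𝓝 0) := by
    have := (tendsto_rpow_neg_atTop (by linarith : 0 < γ - 1)).comp tendsto_natCast_atTop_atTop
    simpa using this.const_mul (C * t ^ γ)
  exact squeeze_zero_norm' ((eventually_gt_atTop 0).mono hbound) hlim

theorem abs_sub_sub_deriv_mul_le_of_lipschitzOnWith {f f' : ℝ → ℝ} {s : Set ℝ} {K : ℝ≥0}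
    (hs : Convex ℝ s) (hf : ∀ z ∈ s, HasDerivWithinAt f (f' z) s z)
    (hf' : LipschitzOnWith K f' s) {x y : ℝ} (hx : x ∈ s) (hy : y ∈ s) :
    |f y - f x - f' x * (y - x)| ≤ K * (y - x) ^ 2 := by
  have hxy : uIcc x y ⊆ s := segment_eq_uIcc x y ▸ hs.segment_subset hx hy
  have hderiv : ∀ z ∈ uIcc x y,
      HasDerivWithinAt (fun z => f z - f' x * z) (f' z - f' x) (uIcc x y) z := fun z hz => by
    have := ((hf z (hxy hz)).sub ((hasDerivWithinAt_id z s).const_mul (f' x))).mono hxy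
    rwa [mul_one] at this
  have hbound : ∀ z ∈ uIcc x y, ‖f' z - f' x‖ ≤ K * |y - x| := fun z hz =>
    calc ‖f' z - f' x‖ ≤ K * |z - x| := hf'.dist_le_mul z (hxy hz) x hx
      _ ≤ K * |y - x| := mul_le_mul_of_nonneg_left (abs_sub_left_of_mem_uIcc hz) K.2
  have := convex_uIcc x y |>.norm_image_sub_le_of_norm_hasDerivWithin_le hderiv hbound
    left_mem_uIcc right_mem_uIcc
  rw [Real.norm_eq_abs, Real.norm_eq_abs, mul_assoc, ← abs_mul, ← sq, abs_sq] at this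
  convert this using 2
  ring

theorem continuousOn_of_abs_sub_le_rpow {f : ℝ → ℝ} {s : Set ℝ} {C r : ℝ} (hr : 0 < r)
    (hf : ∀ a ∈ s, ∀ b ∈ s, |f b - f a| ≤ C * |b - a| ^ r) : ContinuousOn f s := by
  intro a ha
  have hcont : ContinuousAt (fun b => C * |b - a| ^ r) a := by fun_prop (disch := positivity)
  refine tendsto_iff_dist_tendsto_zero.2 (squeeze_zero' (Eventually.of_forall fun _ => dist_nonneg)
    (eventually_mem_nhdsWithin.mono fun b hb => hf a ha b hb) ?_)
  simpa [zero_rpow hr.ne'] using hcont.tendsto.mono_left nhdsWithin_le_nhds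

theorem tendsto_sum_deriv_mul_sub_of_abs_sub_le_rpow {f f' y : ℝ → ℝ} {s : Set ℝ} {K : ℝ≥0}
    {t C r : ℝ} (ht : 0 ≤ t) (hr : 1 / 2 < r) (hs : Convex ℝ s)
    (hf : ∀ z ∈ s, HasDerivWithinAt f (f' z) s z) (hf' : LipschitzOnWith K f' s)
    (hys : MapsTo y (Icc 0 t) s)
    (hy : ∀ a ∈ Icc 0 t, ∀ b ∈ Icc 0 t, |y b - y a| ≤ C * |b - a| ^ r) :
    Tendsto (fun N : ℕ => ∑ k ∈ Finset.range N,
        f' (y (k * t / N)) * (y ((k + 1) * t / N) - y (k * t / N)))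
      atTop (𝓝 (f (y t) - f (y 0))) := by
  have herr := tendsto_sum_uniform_partition_of_abs_le_rpow
    (e := fun a b => f' (y a) * (y b - y a) - (f (y b) - f (y a))) (C := K * C ^ 2)
    (γ := 2 * r) ht (by linarith) fun a ha b hb hab => by
      have hy2 : (y b - y a) ^ 2 ≤ C ^ 2 * (b - a) ^ (2 * r) := by
        rw [mul_comm 2 r, rpow_mul (sub_nonneg.2 hab), rpow_two, ← mul_pow, ← sq_abs,
          ← abs_of_nonneg (sub_nonneg.2 hab)]
        exact pow_le_pow_left₀ (abs_nonneg _) (hy a ha b hb) 2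
      calc |f' (y a) * (y b - y a) - (f (y b) - f (y a))|
          = |f (y b) - f (y a) - f' (y a) * (y b - y a)| := abs_sub_comm _ _
        _ ≤ K * (y b - y a) ^ 2 :=
          abs_sub_sub_deriv_mul_le_of_lipschitzOnWith hs hf hf' (hys ha) (hys hb)
        _ ≤ K * C ^ 2 * (b - a) ^ (2 * r) := by rw [mul_assoc]; gcongr
  rw [← tendsto_sub_nhds_zero_iff]
  refine herr.congr' ((eventually_gt_atTop 0).mono fun N hN => ?_)
  have hN : (N : ℝ) ≠ 0 := by positivity
  have htel : ∑ k ∈ Finset.range N, (f (y ((k + 1) * t / N)) - f (y (k * t / N))) =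
      f (y t) - f (y 0) := by
    simpa [hN] using Finset.sum_range_sub (fun k : ℕ => f (y (k * t / N))) N
  rw [Finset.sum_sub_distrib, htel]

theorem tendsto_sum_mul_integral_of_abs_sub_le_rpow {h g : ℝ → ℝ} {t C r B : ℝ} (ht : 0 ≤ t)
    (hr : 0 < r) (hh : ∀ a ∈ Icc 0 t, ∀ b ∈ Icc 0 t, |h b - h a| ≤ C * |b - a| ^ r)
    (hg : IntervalIntegrable g volume 0 t) (hgB : ∀ s ∈ Icc 0 t, |g s| ≤ B) :
    Tendsto (fun N : ℕ => ∑ k ∈ Finset.range N,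
        h (k * t / N) * ∫ s in k * t / N..(k + 1) * t / N, g s)
      atTop (𝓝 (∫ s in 0..t, h s * g s)) := by
  have hhg : IntervalIntegrable (fun s => h s * g s) volume 0 t :=
    hg.continuousOn_mul (uIcc_of_le ht ▸ continuousOn_of_abs_sub_le_rpow hr hh)
  have hsub : ∀ a ∈ Icc 0 t, ∀ b ∈ Icc 0 t, uIcc a b ⊆ uIcc 0 t := fun a ha b hb =>
    uIcc_subset_uIcc (Icc_subset_uIcc ha) (Icc_subset_uIcc hb)
  have herr := tendsto_sum_uniform_partition_of_abs_le_rpow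
    (e := fun a b => h a * (∫ s in a..b, g s) - ∫ s in a..b, h s * g s) (C := max C 0 * B)
    (γ := r + 1) ht (by linarith) fun a ha b hb hab => by
      have hbound : ∀ s ∈ uIoc a b, ‖(h a - h s) * g s‖ ≤ max C 0 * (b - a) ^ r * B := by
        intro s hs
        rw [uIoc_of_le hab] at hs
        have hs' : s ∈ Icc 0 t := ⟨ha.1.trans hs.1.le, hs.2.trans hb.2⟩
        have hdist : |a - s| ≤ b - a := abs_sub_le_iff.2 ⟨by linarith [hs.1], by linarith [hs.2]⟩
        rw [Real.norm_eq_abs, abs_mul]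
        refine mul_le_mul ?_ (hgB s hs') (abs_nonneg _) (by positivity)
        calc |h a - h s| ≤ C * |a - s| ^ r := hh s hs' a ha
          _ ≤ max C 0 * |a - s| ^ r := by gcongr; exact le_max_left C 0
          _ ≤ max C 0 * (b - a) ^ r := by gcongr
      rw [← intervalIntegral.integral_const_mul, ← intervalIntegral.integral_sub
        ((hg.mono_set (hsub a ha b hb)).const_mul _) (hhg.mono_set (hsub a ha b hb))]
      simp_rw [← sub_mul]
      calc _ ≤ max C 0 * (b - a) ^ r * B * |b - a| :=
            intervalIntegral.norm_integral_le_of_norm_le_const hbound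
        _ = max C 0 * B * (b - a) ^ (r + 1) := by
          rw [abs_of_nonneg (sub_nonneg.2 hab), rpow_add_one' (sub_nonneg.2 hab) (by linarith)]
          ring
  rw [← tendsto_sub_nhds_zero_iff]
  refine herr.congr' ((eventually_gt_atTop 0).mono fun N hN => ?_)
  have hN : (N : ℝ) ≠ 0 := by positivity
  have htel : ∑ k ∈ Finset.range N, ∫ s in k * t / N..(k + 1) * t / N, h s * g s =
      ∫ s in 0..t, h s * g s := by
    have := intervalIntegral.sum_integral_adjacent_intervals (μ := volume)
      (a := fun k : ℕ => k * t / N) fun k hk => hhg.mono_set (by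
        obtain ⟨hk0, hk1⟩ := uniform_partition_mem_Icc ht hk
        push_cast
        exact hsub _ hk0 _ hk1)
    simpa [mul_div_cancel_left₀ _ hN] using this
  rw [Finset.sum_sub_distrib, htel]

theorem IsCompact.exists_pos_mapsTo_Icc {α : Type*} [TopologicalSpace α] {s : Set α}
    {f : α → ℝ} (hs : IsCompact s) (hne : s.Nonempty) (hf : ContinuousOn f s)
    (hpos : ∀ x ∈ s, 0 < f x) : ∃ m M, 0 < m ∧ MapsTo f s (Icc m M) := by
  obtain ⟨a, ha, hmin⟩ := hs.exists_isMinOn hne hf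
  obtain ⟨b, -, hmax⟩ := hs.exists_isMaxOn hne hf
  exact ⟨f a, f b, hpos a ha, fun x hx => ⟨hmin hx, hmax hx⟩⟩

theorem tendsto_sum_rpow_mul_sub_of_eq_add_integral {Y Z F : ℝ → ℝ} {t C r β : ℝ} (ht : 0 ≤ t)
    (hr : 1 / 2 < r) (hβ : β + 1 ≠ 0) (hYpos : ∀ s ∈ Icc 0 t, 0 < Y s)
    (hY : ∀ a ∈ Icc 0 t, ∀ b ∈ Icc 0 t, |Y b - Y a| ≤ C * |b - a| ^ r)
    (hF : ContinuousOn F (Icc 0 t)) (hYZ : ∀ s ∈ Icc 0 t, Y s = Y 0 + (∫ u in 0..s, F u) + Z s) :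
    Tendsto (fun N : ℕ => ∑ k ∈ Finset.range N,
        Y (k * t / N) ^ β * (Z ((k + 1) * t / N) - Z (k * t / N)))
      atTop (𝓝 ((Y t ^ (β + 1) - Y 0 ^ (β + 1)) / (β + 1) - ∫ s in 0..t, Y s ^ β * F s)) := by
  obtain ⟨m, M, hm, hYmM⟩ := isCompact_Icc.exists_pos_mapsTo_Icc ⟨0, left_mem_Icc.2 ht⟩
    (continuousOn_of_abs_sub_le_rpow (by linarith) hY) hYpos
  obtain ⟨K, hK⟩ : ∃ K, LipschitzOnWith K (fun y : ℝ => y ^ β) (Icc m M) :=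
    ContDiffOn.exists_lipschitzOnWith (n := 1) (fun y hy =>
      (contDiffAt_rpow_const_of_ne (hm.trans_le hy.1).ne').contDiffWithinAt) one_ne_zero
      (convex_Icc m M) isCompact_Icc
  have hderiv : ∀ y ∈ Icc m M,
      HasDerivWithinAt (fun y => y ^ (β + 1) / (β + 1)) (y ^ β) (Icc m M) y := fun y hy => by
    have := ((hasDerivAt_rpow_const (p := β + 1) (Or.inl (hm.trans_le hy.1).ne')).div_const
      (β + 1)).hasDerivWithinAt (s := Icc m M)
    rwa [add_sub_cancel_right, mul_div_cancel_left₀ _ hβ] at this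
  have hYβ : ∀ a ∈ Icc 0 t, ∀ b ∈ Icc 0 t, |Y b ^ β - Y a ^ β| ≤ K * C * |b - a| ^ r :=
    fun a ha b hb => calc
      _ ≤ K * |Y b - Y a| := hK.dist_le_mul _ (hYmM hb) _ (hYmM ha)
      _ ≤ K * (C * |b - a| ^ r) := by gcongr; exact hY a ha b hb
      _ = _ := by ring
  have hFint : ∀ s ∈ Icc 0 t, IntervalIntegrable F volume 0 s := fun s hs =>
    (hF.mono (Icc_subset_Icc_right hs.2)).intervalIntegrable_of_Icc hs.1
  have hZ : ∀ a ∈ Icc 0 t, ∀ b ∈ Icc 0 t, Z b - Z a = Y b - Y a - ∫ u in a..b, F u :=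
    fun a ha b hb => by
      rw [← intervalIntegral.integral_interval_sub_left (hFint b hb) (hFint a ha),
        hYZ a ha, hYZ b hb]
      ring
  obtain ⟨B, hB⟩ := isCompact_Icc.exists_bound_of_continuousOn hF
  have hdY := tendsto_sum_deriv_mul_sub_of_abs_sub_le_rpow ht hr (convex_Icc m M) hderiv hK hYmM hY
  have hdF := tendsto_sum_mul_integral_of_abs_sub_le_rpow ht (by linarith) hYβ
    (hFint t ⟨ht, le_rfl⟩) hB
  rw [sub_div]
  refine (hdY.sub hdF).congr fun N => ?_
  rw [← Finset.sum_sub_distrib]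
  refine Finset.sum_congr rfl fun k hk => ?_
  obtain ⟨hk0, hk1⟩ := uniform_partition_mem_Icc ht (Finset.mem_range.1 hk)
  rw [hZ _ hk0 _ hk1]
  ring

theorem rpow_mul_sub_rpow_neg {y : ℝ} (hy : 0 < y) (β κ θ : ℝ) :
    y ^ β * (κ * y ^ (-β) - θ * y) = κ - θ * y ^ (β + 1) := by
  rw [rpow_neg hy.le, rpow_add_one hy.ne']
  field_simp

theorem stmt14_general (T alpha kappa theta lam LamY : ℝ)
    (halpha : alpha ∈ Set.Ico (1/2 : ℝ) 1)
    (hlam : 1/2 < lam)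
    (Y Z X : ℝ → ℝ)
    (hYpos : ∀ t ∈ Set.Icc 0 T, 0 < Y t)
    (hYH : ∀ s ∈ Set.Icc 0 T, ∀ t ∈ Set.Icc 0 T, |Y t - Y s| ≤ LamY * |t - s| ^ lam)
    (heq : ∀ t ∈ Set.Icc 0 T, Y t = Y 0 +
      (∫ s in (0:ℝ)..t, (kappa * Y s ^ (-(alpha / (1 - alpha))) - theta * Y s)) + Z t)
    (hX : ∀ t, X t = Y t ^ (1 / (1 - alpha))) :
    ∀ t ∈ Set.Icc 0 T, ∃ J : ℝ,
      Tendsto (fun N : ℕ => ∑ k ∈ Finset.range N,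
        X ((k : ℝ) * t / (N : ℝ)) ^ alpha *
          (Z (((k : ℝ) + 1) * t / (N : ℝ)) - Z ((k : ℝ) * t / (N : ℝ))))
        atTop (nhds J) ∧
      X t = X 0 + (∫ s in (0:ℝ)..t, (kappa / (1 - alpha) - theta / (1 - alpha) * X s)) +
        1 / (1 - alpha) * J := by
  intro t ht
  have h1α : 0 < 1 - alpha := sub_pos.2 halpha.2
  set β := alpha / (1 - alpha) with hβ
  have hp : 1 / (1 - alpha) = β + 1 := by rw [hβ]; field_simp; ring
  have hβ0 : β + 1 ≠ 0 := by rw [← hp]; positivity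
  have hβα : (β + 1) * (1 - alpha) = 1 := by rw [← hp, one_div_mul_cancel h1α.ne']
  have hXα : ∀ s ∈ Icc 0 T, X s ^ alpha = Y s ^ β := fun s hs => by
    rw [hX, hp, ← rpow_mul (hYpos s hs).le]
    congr 1
    linear_combination -hβα
  have hsub : Icc 0 t ⊆ Icc 0 T := Icc_subset_Icc_right ht.2
  have hYt : ∀ a ∈ Icc 0 t, ∀ b ∈ Icc 0 t, |Y b - Y a| ≤ LamY * |b - a| ^ lam :=
    fun a ha b hb => hYH a (hsub ha) b (hsub hb)
  have hF : ContinuousOn (fun s => kappa * Y s ^ (-β) - theta * Y s) (Icc 0 t) := by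
    have hYc := continuousOn_of_abs_sub_le_rpow (by linarith) hYt
    exact (continuousOn_const.mul (hYc.rpow_const fun s hs => Or.inl (hYpos s (hsub hs)).ne')).sub
      (continuousOn_const.mul hYc)
  have hlim := tendsto_sum_rpow_mul_sub_of_eq_add_integral ht.1 hlam hβ0
    (fun s hs => hYpos s (hsub hs)) hYt hF (fun s hs => heq s (hsub hs))
  refine ⟨_, hlim.congr fun N => Finset.sum_congr rfl fun k hk => ?_, ?_⟩
  · rw [hXα _ (hsub (uniform_partition_mem_Icc ht.1 (Finset.mem_range.1 hk)).1)]
  · have hI : ∫ s in 0..t, Y s ^ β * (kappa * Y s ^ (-β) - theta * Y s) =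
        (1 - alpha) * ∫ s in 0..t, (kappa / (1 - alpha) - theta / (1 - alpha) * X s) := by
      rw [← intervalIntegral.integral_const_mul]
      refine intervalIntegral.integral_congr fun s hs => ?_
      rw [uIcc_of_le ht.1] at hs
      simp only [rpow_mul_sub_rpow_neg (hYpos s (hsub hs)), hX, hp]
      field_simp
    rw [hI, hX t, hX 0, hp, mul_sub, mul_div_cancel₀ _ hβ0, ← mul_assoc, hβα]
    ring

/-- Chain rule for X = Y^{1/(1−α)}: X satisfies the generalized CIR/CEV equation,
where the Young integral ∫₀ᵗ X^α dZ is realized as the limit of Riemann–Stieltjes sums. -/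
theorem stmt14 (T alpha kappa theta lam LamY LamZ : ℝ) (hT : 0 < T)
    (halpha : alpha ∈ Set.Ico (1/2 : ℝ) 1) (hkappa : 0 < kappa) (htheta : 0 < theta)
    (hlam : 1/2 < lam) (hlam1 : lam < 1)
    (Y Z X : ℝ → ℝ)
    (hYpos : ∀ t ∈ Set.Icc 0 T, 0 < Y t)
    (hYH : ∀ s ∈ Set.Icc 0 T, ∀ t ∈ Set.Icc 0 T, |Y t - Y s| ≤ LamY * |t - s| ^ lam)
    (hZH : ∀ s ∈ Set.Icc 0 T, ∀ t ∈ Set.Icc 0 T, |Z t - Z s| ≤ LamZ * |t - s| ^ lam)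
    (heq : ∀ t ∈ Set.Icc 0 T, Y t = Y 0 +
      (∫ s in (0:ℝ)..t, (kappa * Y s ^ (-(alpha / (1 - alpha))) - theta * Y s)) + Z t)
    (hX : ∀ t, X t = Y t ^ (1 / (1 - alpha))) :
    ∀ t ∈ Set.Icc 0 T, ∃ J : ℝ,
      Tendsto (fun N : ℕ => ∑ k ∈ Finset.range N,
        X ((k : ℝ) * t / (N : ℝ)) ^ alpha *
          (Z (((k : ℝ) + 1) * t / (N : ℝ)) - Z ((k : ℝ) * t / (N : ℝ))))
        atTop (nhds J) ∧
      X t = X 0 + (∫ s in (0:ℝ)..t, (kappa / (1 - alpha) - theta / (1 - alpha) * X s)) +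
        1 / (1 - alpha) * J :=
  stmt14_general T alpha kappa theta lam LamY halpha hlam Y Z X hYpos hYH heq hX
end

section
/- Let λ ∈ (0,1), p ≥ 2, λ_p := λ − 2/p, and suppose γλ_p + λ_p > 1. Suppose random variables A, B ≥ 0 satisfy E[A²] < ∞, sup over paths |Y_t − Ỹ_t^{(n)}| ≤ A on the event Ω \ 𝒜_n where P(Ω \ 𝒜_n) ≤ C₁ δ_n^{γλ_p+λ_p−1}, Y = Ỹ^{(n)} on 𝒜_n, and E[sup_t |Ỹ_t^{(n)} − Ŷ_t^{N,n}|] ≤ C₂ (1+c_n) e^{c_n} N^{−λ_p}. Then E[sup_{t∈[0,T]} |Y_t − Ŷ_t^{N,n}|] ≤ C (δ_n^{(γλ_p+λ_p−1)/2} + (1+c_n) e^{c_n} N^{−λ_p}) for a constant C independent of n and N. -/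
open Set Real MeasureTheory

/-!
On the event `𝒜ₙ` the truncated and the true solution coincide, so the truncation error is
supported on the bad event, where it is dominated by the square-integrable `A`. Cauchy–Schwarz
bounds its expectation by `‖A‖₂ · P(Ω \ 𝒜ₙ)^{1/2} ≲ δₙ^{(γλₚ + λₚ - 1)/2}`, and the triangle
inequality adds the Euler error of the truncated equation.
-/

theorem Real.sqrt_rpow {x : ℝ} (hx : 0 ≤ x) (y : ℝ) : √(x ^ y) = x ^ (y / 2) := by
  rw [sqrt_eq_rpow, ← rpow_mul hx]
  ring_nf

section CauchySchwarz

variable {α : Type*} [MeasurableSpace α] {μ : Measure α}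

theorem memLp_two_of_nonneg_of_integrable_sq {f : α → ℝ} (hf0 : 0 ≤ f)
    (hf : Integrable (fun x => f x ^ 2) μ) : MemLp f 2 μ := by
  have hmeas : AEStronglyMeasurable f μ := by
    have h := continuous_sqrt.comp_aestronglyMeasurable hf.aestronglyMeasurable
    simpa only [Function.comp_def, sqrt_sq (hf0 _)] using h
  exact (memLp_two_iff_integrable_sq hmeas).2 hf

theorem setIntegral_le_sqrt_integral_sq_mul_sqrt_measureReal {f : α → ℝ} {s : Set α}
    (hf0 : 0 ≤ᵐ[μ] f) (hf : MemLp f 2 μ) (hs : MeasurableSet s) (hμs : μ s ≠ ⊤) :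
    ∫ x in s, f x ∂μ ≤ √(∫ x, f x ^ 2 ∂μ) * √(μ.real s) := by
  have h := integral_mul_le_Lp_mul_Lq_of_nonneg HolderConjugate.two_two hf0
    (ae_of_all _ (indicator_nonneg fun _ _ => zero_le_one))
    (by simpa using hf) (memLp_indicator_const _ hs (1 : ℝ) (Or.inr hμs))
  have hmul : ∀ x, f x * s.indicator (fun _ => (1 : ℝ)) x = s.indicator f x := fun x => by
    by_cases hx : x ∈ s <;> simp [hx]
  have hsq : ∀ x, s.indicator (fun _ => (1 : ℝ)) x ^ (2 : ℝ) = s.indicator (fun _ => 1) x :=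
    fun x => by by_cases hx : x ∈ s <;> simp [hx]
  simpa only [hmul, hsq, integral_indicator hs, setIntegral_const, smul_eq_mul, mul_one,
    rpow_two, ← sqrt_eq_rpow] using h

theorem integral_le_sqrt_integral_sq_mul_sqrt_measureReal_of_le_indicator [IsFiniteMeasure μ]
    {f g : α → ℝ} {s : Set α} (hf0 : 0 ≤ᵐ[μ] f) (hfg : f ≤ᵐ[μ] s.indicator g)
    (hg0 : 0 ≤ᵐ[μ] g) (hg : MemLp g 2 μ) (hs : MeasurableSet s) :
    ∫ x, f x ∂μ ≤ √(∫ x, g x ^ 2 ∂μ) * √(μ.real s) := calc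
  ∫ x, f x ∂μ ≤ ∫ x, s.indicator g x ∂μ :=
    integral_mono_of_nonneg hf0 ((hg.integrable one_le_two).indicator hs) hfg
  _ = ∫ x in s, g x ∂μ := integral_indicator hs
  _ ≤ √(∫ x, g x ^ 2 ∂μ) * √(μ.real s) :=
    setIntegral_le_sqrt_integral_sq_mul_sqrt_measureReal hg0 hg hs (measure_ne_top μ s)

end CauchySchwarz

theorem stmt16_general {Ω : Type*} [MeasureSpace Ω]
    [IsProbabilityMeasure (volume : Measure Ω)]
    (gam lamp C1 C2 : ℝ)
    (hC2 : 0 < C2)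
    (δ c : ℕ → ℝ) (hδ : ∀ n, 0 < δ n) (hcpos : ∀ n, 0 ≤ c n)
    (A : Ω → ℝ) (hA0 : ∀ ω, 0 ≤ A ω)
    (hA : Integrable (fun ω => A ω ^ 2))
    (DY : ℕ → Ω → ℝ) (DE DT : ℕ → ℕ → Ω → ℝ)
    (An : ℕ → Set Ω) (hAn : ∀ n, MeasurableSet (An n))
    (hDYmeas : ∀ n, Measurable (DY n)) (hDY0 : ∀ n ω, 0 ≤ DY n ω)
    (hDYA : ∀ n, ∀ ω ∉ An n, DY n ω ≤ A ω)
    (hDYeq : ∀ n, ∀ ω ∈ An n, DY n ω = 0)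
    (hP : ∀ n, (volume (An n)ᶜ).toReal ≤ C1 * δ n ^ (gam * lamp + lamp - 1))
    (hDEint : ∀ n N, 1 ≤ N → Integrable (DE n N))
    (hDE : ∀ n N, 1 ≤ N →
      ∫ ω, DE n N ω ≤ C2 * (1 + c n) * Real.exp (c n) * (N : ℝ) ^ (-lamp))
    (htri : ∀ n N ω, DT n N ω ≤ DY n ω + DE n N ω)
    (hDTint : ∀ n N, 1 ≤ N → Integrable (DT n N)) :
    ∃ C, 0 < C ∧ ∀ n N : ℕ, 1 ≤ N →
      ∫ ω, DT n N ω ≤ C * (δ n ^ ((gam * lamp + lamp - 1) / 2) +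
        (1 + c n) * Real.exp (c n) * (N : ℝ) ^ (-lamp)) := by
  set e := gam * lamp + lamp - 1
  set K := √(∫ ω, A ω ^ 2) * √C1 with hK
  have hAL2 : MemLp A 2 := memLp_two_of_nonneg_of_integrable_sq hA0 hA
  have hDY_le : ∀ n, DY n ≤ (An n)ᶜ.indicator A := fun n =>
    le_indicator (hDYA n) fun ω hω => (hDYeq n ω (not_not.1 hω)).le
  have hDY_bound : ∀ n, ∫ ω, DY n ω ≤ K * δ n ^ (e / 2) := fun n => calc
    ∫ ω, DY n ω ≤ √(∫ ω, A ω ^ 2) * √(volume.real (An n)ᶜ) :=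
      integral_le_sqrt_integral_sq_mul_sqrt_measureReal_of_le_indicator (ae_of_all _ (hDY0 n))
        (ae_of_all _ (hDY_le n)) (ae_of_all _ hA0) hAL2 (hAn n).compl
    _ ≤ √(∫ ω, A ω ^ 2) * √(C1 * δ n ^ e) := by gcongr; exact hP n
    _ = K * δ n ^ (e / 2) := by
      rw [sqrt_mul' _ (rpow_nonneg (hδ n).le _), sqrt_rpow (hδ n).le, hK, mul_assoc]
  have hDY_int : ∀ n, Integrable (DY n) := fun n =>
    ((hAL2.integrable one_le_two).indicator (hAn n).compl).mono' (hDYmeas n).aestronglyMeasurable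
      (ae_of_all _ fun ω => by simpa [abs_of_nonneg (hDY0 n ω)] using hDY_le n ω)
  refine ⟨K + C2, by positivity, fun n N hN => ?_⟩
  have hEuler_nonneg : 0 ≤ (1 + c n) * Real.exp (c n) * (N : ℝ) ^ (-lamp) := by
    have := hcpos n; positivity
  calc ∫ ω, DT n N ω ≤ ∫ ω, (DY n ω + DE n N ω) :=
        integral_mono (hDTint n N hN) ((hDY_int n).add (hDEint n N hN)) (htri n N)
    _ = (∫ ω, DY n ω) + ∫ ω, DE n N ω := integral_add (hDY_int n) (hDEint n N hN)
    _ ≤ K * δ n ^ (e / 2) + C2 * (1 + c n) * Real.exp (c n) * (N : ℝ) ^ (-lamp) :=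
        add_le_add (hDY_bound n) (hDE n N hN)
    _ ≤ (K + C2) * (δ n ^ (e / 2) + (1 + c n) * Real.exp (c n) * (N : ℝ) ^ (-lamp)) := by
        nlinarith [mul_nonneg (by positivity : 0 ≤ K) hEuler_nonneg,
          mul_nonneg hC2.le (rpow_nonneg (hδ n).le (e / 2))]

/-- Error decomposition of the semi-heuristic Euler scheme: combining the truncation
error (via Cauchy–Schwarz on the bad event) and the Euler error of the truncated
equation yields the total error bound with a constant independent of n and N. -/
theorem stmt16 {Ω : Type*} [MeasureSpace Ω]
    [IsProbabilityMeasure (volume : Measure Ω)]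
    (gam lam p lamp C1 C2 : ℝ) (hp : 2 ≤ p) (hlam : lam ∈ Set.Ioo (0:ℝ) 1)
    (hlamp : lamp = lam - 2 / p) (hcond : 1 < gam * lamp + lamp)
    (hC1 : 0 < C1) (hC2 : 0 < C2)
    (δ c : ℕ → ℝ) (hδ : ∀ n, 0 < δ n) (hcpos : ∀ n, 0 ≤ c n)
    (A : Ω → ℝ) (hA0 : ∀ ω, 0 ≤ A ω)
    (hA : Integrable (fun ω => A ω ^ 2))
    (DY : ℕ → Ω → ℝ) (DE DT : ℕ → ℕ → Ω → ℝ)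
    (An : ℕ → Set Ω) (hAn : ∀ n, MeasurableSet (An n))
    (hDYmeas : ∀ n, Measurable (DY n)) (hDY0 : ∀ n ω, 0 ≤ DY n ω)
    (hDYA : ∀ n, ∀ ω ∉ An n, DY n ω ≤ A ω)
    (hDYeq : ∀ n, ∀ ω ∈ An n, DY n ω = 0)
    (hP : ∀ n, (volume (An n)ᶜ).toReal ≤ C1 * δ n ^ (gam * lamp + lamp - 1))
    (hDEint : ∀ n N, 1 ≤ N → Integrable (DE n N))
    (hDE : ∀ n N, 1 ≤ N →
      ∫ ω, DE n N ω ≤ C2 * (1 + c n) * Real.exp (c n) * (N : ℝ) ^ (-lamp))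
    (htri : ∀ n N ω, DT n N ω ≤ DY n ω + DE n N ω)
    (hDTint : ∀ n N, 1 ≤ N → Integrable (DT n N)) :
    ∃ C, 0 < C ∧ ∀ n N : ℕ, 1 ≤ N →
      ∫ ω, DT n N ω ≤ C * (δ n ^ ((gam * lamp + lamp - 1) / 2) +
        (1 + c n) * Real.exp (c n) * (N : ℝ) ^ (-lamp)) :=
  stmt16_general gam lamp C1 C2 hC2 δ c hδ hcpos A hA0 hA DY DE DT An hAn hDYmeas hDY0 hDYA hDYeq hP
    hDEint hDE htri hDTint
end
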